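/- Let U = O·V where O and V are unitary n×n complex matrices with O·V = V·O and O² = 1, and let W be an invertible n×n complex matrix with W·O = −O·W and W·V = V·W. Then for every λ ∈ ℂ, the map ψ ↦ W ψ restricts to a linear bijection from the eigenspace ker(U − λ·1) onto the eigenspace ker(U + λ·1); consequently these two eigenspaces have equal dimension. (This gives the rigid pairing of equally degenerate Floquet eigenspaces with eigenphase difference π.) -/

import Mathlib

/-! `W` anticommutes with `U = O·V`, hence `W (U - λ) = -(U + λ) W`, so the invertible `W`
carries `ker (U - λ)` onto `ker (U + λ)`. -/

open Matrix

theorem mul_mul_eq_neg_of_anticomm_of_comm {A : Type*} [Ring A] {w o v : A}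
    (hwo : w * o = -(o * w)) (hwv : w * v = v * w) : w * (o * v) = -(o * v * w) := by
  rw [← mul_assoc, hwo, neg_mul, mul_assoc, hwv, ← mul_assoc]

theorem mul_sub_smul_one_eq_neg_of_anticomm {R A : Type*} [CommRing R] [Ring A] [Algebra R A]
    {w u : A} (hwu : w * u = -(u * w)) (c : R) :
    w * (u - c • 1) = -((u + c • 1) * w) := by
  rw [mul_sub, add_mul, neg_add, hwu, mul_smul_one, smul_one_mul, sub_eq_add_neg]

namespace Matrix

variable {m R : Type*} [Fintype m] [DecidableEq m] [CommRing R]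

theorem ker_mulVecLin_eq_comap_of_mul_eq_neg_mul {W A B : Matrix m m R} [Invertible W]
    (h : W * A = -(B * W)) :
    LinearMap.ker A.mulVecLin = (LinearMap.ker B.mulVecLin).comap W.mulVecLin := by
  have hW : Function.Injective W.mulVec := (W.toLinearEquiv' ‹_›).injective
  ext v
  simp only [LinearMap.mem_ker, Submodule.mem_comap, mulVecLin_apply]
  rw [← hW.eq_iff, mulVec_zero, mulVec_mulVec, h, neg_mulVec, neg_eq_zero, ← mulVec_mulVec]

theorem map_ker_mulVecLin_of_mul_eq_neg_mul {W A B : Matrix m m R} [Invertible W]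
    (h : W * A = -(B * W)) :
    (LinearMap.ker A.mulVecLin).map (W.toLinearEquiv' ‹_› : (m → R) →ₗ[R] m → R) =
      LinearMap.ker B.mulVecLin := by
  rw [ker_mulVecLin_eq_comap_of_mul_eq_neg_mul h]
  exact Submodule.map_comap_eq_of_surjective (W.toLinearEquiv' ‹_›).surjective _

end Matrix

theorem TTC_eigenspace_pairing_general (n : ℕ)
    (O V W : Matrix (Fin n) (Fin n) ℂ)
    (hW : IsUnit W)
    (hWO : W * O = -(O * W))
    (hWV : W * V = V * W)
    (U : Matrix (Fin n) (Fin n) ℂ) (hU : U = O * V) :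
    ∀ lam : ℂ,
      (∃ e : LinearMap.ker (U - lam • (1 : Matrix (Fin n) (Fin n) ℂ)).mulVecLin ≃ₗ[ℂ]
              LinearMap.ker (U + lam • (1 : Matrix (Fin n) (Fin n) ℂ)).mulVecLin,
          ∀ v : LinearMap.ker (U - lam • (1 : Matrix (Fin n) (Fin n) ℂ)).mulVecLin,
            (e v : Fin n → ℂ) = W.mulVec (v : Fin n → ℂ)) ∧
      Module.finrank ℂ (LinearMap.ker (U - lam • (1 : Matrix (Fin n) (Fin n) ℂ)).mulVecLin) =
        Module.finrank ℂ (LinearMap.ker (U + lam • (1 : Matrix (Fin n) (Fin n) ℂ)).mulVecLin) := by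
  intro lam
  have : Invertible W := hW.invertible
  have hWU : W * U = -(U * W) := hU ▸ mul_mul_eq_neg_of_anticomm_of_comm hWO hWV
  let e := (W.toLinearEquiv' ‹_›).ofSubmodules _ _
    (map_ker_mulVecLin_of_mul_eq_neg_mul (mul_sub_smul_one_eq_neg_of_anticomm hWU lam))
  exact ⟨⟨e, fun _ => rfl⟩, e.finrank_eq⟩

/-- Rigid pairing of equally degenerate Floquet eigenspaces with eigenphase difference π:
with `U = O·V` as in the canonical TTC drive and `W` invertible, anticommuting with `O`
and commuting with `V`, the map `ψ ↦ W ψ` restricts to a linear bijection from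
`ker(U − λ·1)` onto `ker(U + λ·1)`, so these eigenspaces have equal dimension. -/
theorem TTC_eigenspace_pairing (n : ℕ)
    (O V W : Matrix (Fin n) (Fin n) ℂ)
    (hO : O * Oᴴ = 1 ∧ Oᴴ * O = 1)
    (hV : V * Vᴴ = 1 ∧ Vᴴ * V = 1)
    (hW : IsUnit W)
    (hOV : O * V = V * O)
    (hO2 : O ^ 2 = 1)
    (hWO : W * O = -(O * W))
    (hWV : W * V = V * W)
    (U : Matrix (Fin n) (Fin n) ℂ) (hU : U = O * V) :
    ∀ lam : ℂ,
      (∃ e : LinearMap.ker (U - lam • (1 : Matrix (Fin n) (Fin n) ℂ)).mulVecLin ≃ₗ[ℂ]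
              LinearMap.ker (U + lam • (1 : Matrix (Fin n) (Fin n) ℂ)).mulVecLin,
          ∀ v : LinearMap.ker (U - lam • (1 : Matrix (Fin n) (Fin n) ℂ)).mulVecLin,
            (e v : Fin n → ℂ) = W.mulVec (v : Fin n → ℂ)) ∧
      Module.finrank ℂ (LinearMap.ker (U - lam • (1 : Matrix (Fin n) (Fin n) ℂ)).mulVecLin) =
        Module.finrank ℂ (LinearMap.ker (U + lam • (1 : Matrix (Fin n) (Fin n) ℂ)).mulVecLin) :=
  TTC_eigenspace_pairing_general n O V W hW hWO hWV U hU
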